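/- arXiv:1806.03700 — 3 statements merged into one kernel-verified Lean document; each statement's English description precedes it below -/
import Mathlib

section
/- Let g ≥ 2 and let s ≤ g. Let R be a set of elements of FreeGroup (Fin s), and let G = PresentedGroup R. Let N be the normal closure in SurfaceGroup g of the union of: the images of the elements of R under the homomorphism FreeGroup (Fin s) →* SurfaceGroup g sending the i-th free generator to aᵢ₊₁, together with the elements a_{s+1},…,a_g, b₁,…,b_g. Then (SurfaceGroup g)/N is isomorphic to G. -/
open scoped commutatorElement

/-- The surface relator `∏ ⁅aᵢ,bᵢ⁆` in `FreeGroup (Fin (2*g))`. -/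
def surfaceRelator (g : ℕ) : FreeGroup (Fin (2 * g)) :=
  ((List.finRange g).map fun i =>
    ⁅FreeGroup.of (⟨i.1, by omega⟩ : Fin (2 * g)),
     FreeGroup.of (⟨g + i.1, by omega⟩ : Fin (2 * g))⁆).prod

/-- The genus-`g` surface group. -/
def SurfaceGroup (g : ℕ) : Type :=
  PresentedGroup ({surfaceRelator g} : Set (FreeGroup (Fin (2 * g))))

instance (g : ℕ) : Group (SurfaceGroup g) := by unfold SurfaceGroup; infer_instance

/-- The generator `a_{i+1}` of the surface group, for `i : Fin g`. -/
def SurfaceGroup.a {g : ℕ} (i : Fin g) : SurfaceGroup g :=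
  PresentedGroup.of (⟨i.1, by omega⟩ : Fin (2 * g))

/-- The generator `b_{i+1}` of the surface group, for `i : Fin g`. -/
def SurfaceGroup.b {g : ℕ} (i : Fin g) : SurfaceGroup g :=
  PresentedGroup.of (⟨g + i.1, by omega⟩ : Fin (2 * g))

/-- The homomorphism `FreeGroup (Fin s) →* SurfaceGroup g` (for `s ≤ g`)
sending the `i`-th free generator to `a_{i+1}`. -/
def toSurfaceGroup {g s : ℕ} (hs : s ≤ g) : FreeGroup (Fin s) →* SurfaceGroup g :=
  FreeGroup.lift fun i => SurfaceGroup.a (⟨i.1, by omega⟩ : Fin g)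

/-!
Sending `aᵢ ↦ xᵢ` for `i < s` and every other generator to `1` respects the surface relator,
since each commutator `⁅aᵢ, bᵢ⁆` goes to `⁅_, 1⁆ = 1`. This map kills `N`, so it descends to
the quotient; conversely `xᵢ ↦ aᵢ` kills `R` modulo `N`. The two maps are mutually inverse on
generators because `a_{s+1}, …, a_g, b₁, …, b_g` are trivial modulo `N`.
-/

namespace SurfaceGroup

section Lift

variable {g : ℕ} {H : Type*} [Group H]

def generatorImage (α β : Fin g → H) (j : Fin (2 * g)) : H :=
  if h : j.1 < g then α ⟨j.1, h⟩ else β ⟨j.1 - g, by omega⟩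

theorem lift_surfaceRelator (α β : Fin g → H) :
    FreeGroup.lift (generatorImage α β) (surfaceRelator g) =
      ((List.finRange g).map fun i => ⁅α i, β i⁆).prod := by
  simp only [surfaceRelator, map_list_prod, List.map_map]
  congr 1
  refine List.map_congr_left fun i _ => ?_
  simp [generatorImage]

def lift (α β : Fin g → H) (h : ((List.finRange g).map fun i => ⁅α i, β i⁆).prod = 1) :
    SurfaceGroup g →* H :=
  PresentedGroup.toGroup (f := generatorImage α β) <| by
    rintro r rfl
    rwa [lift_surfaceRelator]

variable (α β : Fin g → H) (h : ((List.finRange g).map fun i => ⁅α i, β i⁆).prod = 1)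

@[simp]
theorem lift_a (i : Fin g) : lift α β h (a i) = α i :=
  (PresentedGroup.toGroup.of _).trans <| dif_pos i.2

@[simp]
theorem lift_b (i : Fin g) : lift α β h (b i) = β i :=
  (PresentedGroup.toGroup.of _).trans <| by simp [generatorImage]

theorem hom_ext {f f' : SurfaceGroup g →* H} (ha : ∀ i, f (a i) = f' (a i))
    (hb : ∀ i, f (b i) = f' (b i)) : f = f' := by
  refine PresentedGroup.ext fun j => ?_
  by_cases hj : j.1 < g
  · exact ha ⟨j.1, hj⟩
  · have := hb ⟨j.1 - g, by omega⟩
    simp only [b, show g + (j.1 - g) = j.1 by omega] at this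
    exact this

end Lift

section Cover

variable {g s : ℕ} (hs : s ≤ g) (R : Set (FreeGroup (Fin s)))

def coverKernel : Subgroup (SurfaceGroup g) :=
  Subgroup.normalClosure
    (toSurfaceGroup hs '' R ∪
      {x | ∃ i : Fin g, s ≤ i.1 ∧ x = a i} ∪
      {x | ∃ i : Fin g, x = b i})

instance : (coverKernel hs R).Normal :=
  Subgroup.normalClosure_normal

def toPresentedGroup : SurfaceGroup g →* PresentedGroup R :=
  lift (fun i => if h : i.1 < s then .of ⟨i.1, h⟩ else 1) 1 <| by simp

@[simp]
theorem toPresentedGroup_a (i : Fin g) :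
    toPresentedGroup R (a i) = if h : i.1 < s then .of ⟨i.1, h⟩ else 1 :=
  lift_a ..

@[simp]
theorem toPresentedGroup_b (i : Fin g) : toPresentedGroup R (b i) = 1 :=
  lift_b ..

theorem toPresentedGroup_comp_toSurfaceGroup :
    (toPresentedGroup R).comp (toSurfaceGroup hs) = PresentedGroup.mk R :=
  FreeGroup.ext_hom _ _ fun i => by simp [toSurfaceGroup, PresentedGroup.of]

theorem coverKernel_le_ker : coverKernel hs R ≤ (toPresentedGroup (g := g) R).ker := by
  refine Subgroup.normalClosure_le_normal ?_
  rintro y ((⟨r, hr, rfl⟩ | ⟨i, hi, rfl⟩) | ⟨i, rfl⟩)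
  · rw [SetLike.mem_coe, MonoidHom.mem_ker, ← MonoidHom.comp_apply,
      toPresentedGroup_comp_toSurfaceGroup hs]
    exact PresentedGroup.one_of_mem hr
  · simp [show ¬ i.1 < s by omega]
  · simp

theorem toSurfaceGroup_mem_coverKernel {r : FreeGroup (Fin s)} (hr : r ∈ R) :
    toSurfaceGroup hs r ∈ coverKernel hs R :=
  Subgroup.subset_normalClosure (.inl (.inl ⟨r, hr, rfl⟩))

theorem a_mem_coverKernel {i : Fin g} (hi : s ≤ i.1) : a i ∈ coverKernel hs R :=
  Subgroup.subset_normalClosure (.inl (.inr ⟨i, hi, rfl⟩))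

theorem b_mem_coverKernel (i : Fin g) : b i ∈ coverKernel hs R :=
  Subgroup.subset_normalClosure (.inr ⟨i, rfl⟩)

def quotientCoverKernelToPresentedGroup :
    SurfaceGroup g ⧸ coverKernel hs R →* PresentedGroup R :=
  QuotientGroup.lift _ _ (coverKernel_le_ker hs R)

@[simp]
theorem quotientCoverKernelToPresentedGroup_mk (x : SurfaceGroup g) :
    quotientCoverKernelToPresentedGroup hs R x = toPresentedGroup R x :=
  rfl

def presentedGroupToQuotientCoverKernel :
    PresentedGroup R →* SurfaceGroup g ⧸ coverKernel hs R :=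
  PresentedGroup.toGroup
    (f := FreeGroup.lift.symm ((QuotientGroup.mk' _).comp (toSurfaceGroup hs))) fun r hr => by
      rw [Equiv.apply_symm_apply, MonoidHom.comp_apply, QuotientGroup.mk'_apply,
        QuotientGroup.eq_one_iff]
      exact toSurfaceGroup_mem_coverKernel hs R hr

@[simp]
theorem presentedGroupToQuotientCoverKernel_of (i : Fin s) :
    presentedGroupToQuotientCoverKernel hs R (.of i) = toSurfaceGroup hs (.of i) :=
  PresentedGroup.toGroup.of _

theorem presentedGroupToQuotientCoverKernel_comp :
    (presentedGroupToQuotientCoverKernel hs R).comp (quotientCoverKernelToPresentedGroup hs R) =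
      MonoidHom.id _ := by
  refine QuotientGroup.monoidHom_ext _ (hom_ext (fun i => ?_) fun i => ?_)
  · by_cases hi : i.1 < s
    · simp [hi, toSurfaceGroup]
    · simpa [hi] using ((QuotientGroup.eq_one_iff _).2 (a_mem_coverKernel hs R (not_lt.1 hi))).symm
  · simpa using ((QuotientGroup.eq_one_iff _).2 (b_mem_coverKernel hs R i)).symm

theorem quotientCoverKernelToPresentedGroup_comp :
    (quotientCoverKernelToPresentedGroup hs R).comp (presentedGroupToQuotientCoverKernel hs R) =
      MonoidHom.id _ := by
  refine PresentedGroup.ext fun i => ?_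
  simp [toSurfaceGroup]

def quotientCoverKernelEquiv : (SurfaceGroup g ⧸ coverKernel hs R) ≃* PresentedGroup R :=
  MonoidHom.toMulEquiv (quotientCoverKernelToPresentedGroup hs R)
    (presentedGroupToQuotientCoverKernel hs R) (presentedGroupToQuotientCoverKernel_comp hs R)
    (quotientCoverKernelToPresentedGroup_comp hs R)

end Cover

end SurfaceGroup

theorem quotient_of_surface_group_iso_presented_group_general
    (g s : ℕ) (hs : s ≤ g) (R : Set (FreeGroup (Fin s))) :
    letI N : Subgroup (SurfaceGroup g) :=
      Subgroup.normalClosure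
        (toSurfaceGroup hs '' R ∪
          {x | ∃ i : Fin g, s ≤ i.1 ∧ x = SurfaceGroup.a i} ∪
          {x | ∃ i : Fin g, x = SurfaceGroup.b i})
    Nonempty ((SurfaceGroup g ⧸ N) ≃* PresentedGroup R) :=
  ⟨SurfaceGroup.quotientCoverKernelEquiv hs R⟩

/-- Writing a presented group `G = ⟨x₁,…,x_s ∣ R⟩` (with `s ≤ g`) as the deck
transformation group of a cover of the genus-`g` surface: the quotient of the
surface group by the normal closure of the relators `R` (rewritten in
`a₁,…,a_s`), together with `a_{s+1},…,a_g, b₁,…,b_g`, is isomorphic to `G`. -/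
theorem quotient_of_surface_group_iso_presented_group
    (g s : ℕ) (hg : 2 ≤ g) (hs : s ≤ g) (R : Set (FreeGroup (Fin s))) :
    letI N : Subgroup (SurfaceGroup g) :=
      Subgroup.normalClosure
        (toSurfaceGroup hs '' R ∪
          {x | ∃ i : Fin g, s ≤ i.1 ∧ x = SurfaceGroup.a i} ∪
          {x | ∃ i : Fin g, x = SurfaceGroup.b i})
    Nonempty ((SurfaceGroup g ⧸ N) ≃* PresentedGroup R) :=
  quotient_of_surface_group_iso_presented_group_general g s hs R
end

section
/- Fix g ≥ 2. Let φ : SurfaceGroup g →* Multiplicative (Fin (2g) → ZMod 2) be the homomorphism sending each standard generator (a₁,…,a_g,b₁,…,b_g, indexed by Fin (2g)) to the corresponding standard basis vector (this is well-defined since the surface relator is a product of commutators). For each nonempty subset A of Fin (2g), let c_A be the image in SurfaceGroup g of the increasing-order product of the free generators indexed by A. Then the kernel of φ (i.e., the fundamental group of the mod 2 homology cover) equals the normal closure in SurfaceGroup g of the 2^{2g} − 1 squares { c_A² : A a nonempty subset of Fin (2g) }. -/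
open scoped commutatorElement

/-- The map to mod 2 homology `(ℤ/2)^{2g}` is well defined on the surface group,
since the surface relator is a product of commutators. -/
theorem surfaceRelator_maps_to_one_mod2 (g : ℕ) :
    ∀ r ∈ ({surfaceRelator g} : Set (FreeGroup (Fin (2 * g)))),
      FreeGroup.lift
        (fun i => Multiplicative.ofAdd (Pi.single i 1 : Fin (2 * g) → ZMod 2)) r = 1 := by
  intro r hr
  rw [Set.mem_singleton_iff] at hr
  subst hr
  unfold surfaceRelator
  rw [map_list_prod, List.map_map]
  apply List.prod_eq_one
  intro x hx
  simp only [List.mem_map, Function.comp_apply] at hx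
  obtain ⟨i, -, rfl⟩ := hx
  rw [map_commutatorElement]
  exact commutatorElement_eq_one_iff_mul_comm.mpr (mul_comm _ _)

/-- The homomorphism `SurfaceGroup g →* (ℤ/2)^{2g}` sending each standard
generator to the corresponding standard basis vector. -/
def surfaceMod2 (g : ℕ) : SurfaceGroup g →* Multiplicative (Fin (2 * g) → ZMod 2) :=
  PresentedGroup.toGroup (surfaceRelator_maps_to_one_mod2 g)

/-- The image in the surface group of the increasing-order product of the free
generators indexed by the finite set `A`. -/
def incProdImage {g : ℕ} (A : Finset (Fin (2 * g))) : SurfaceGroup g :=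
  QuotientGroup.mk' (Subgroup.normalClosure {surfaceRelator g})
    ((A.sort (· ≤ ·)).map FreeGroup.of).prod

/-!
Let `N` be the normal closure of the squares. In the quotient by `N` the images of the generators
are involutions (the squares `c_{i}²`), and any two of them commute, since `c_{ij}² = (xy)² = 1`
with `x = x⁻¹`, `y = y⁻¹` forces `xy = (xy)⁻¹ = yx`. Hence the quotient is an elementary abelian
2-group generated by the images of the `2g` generators, and the quotient map factors through the
mod 2 homology map, sending `e_i` to the `i`-th generator: this gives `ker ≤ N`. Conversely every
square dies in `(ℤ/2)^{2g}`.
-/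

section

variable {G Q : Type*} [Group G] [Group Q]

def zmodPowersHom (n : ℕ) [NeZero n] (q : Q) (hq : q ^ n = 1) : Multiplicative (ZMod n) →* Q :=
  MonoidHom.mk' (fun x => q ^ x.toAdd.val) fun x y => by
    rw [toAdd_mul, ZMod.val_add, ← pow_eq_pow_mod _ hq, pow_add]

theorem zmodPowersHom_ofAdd_one (n : ℕ) [Fact (1 < n)] (q : Q) (hq : q ^ n = 1) :
    zmodPowersHom n q hq (Multiplicative.ofAdd 1) = q := by
  simp [zmodPowersHom, ZMod.val_one]

theorem commute_of_sq_eq_one {a b : Q} (ha : a ^ 2 = 1) (hb : b ^ 2 = 1) (hab : (a * b) ^ 2 = 1) :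
    Commute a b := by
  have inv_self : ∀ x : Q, x ^ 2 = 1 → x⁻¹ = x := fun x hx =>
    inv_eq_of_mul_eq_one_right (by rwa [← pow_two])
  calc a * b = (a * b)⁻¹ := (inv_self _ hab).symm
    _ = b * a := by rw [mul_inv_rev, inv_self _ ha, inv_self _ hb]

theorem MonoidHom.ker_le_ker_of_pow_eq_one {ι : Type*} [Fintype ι] [DecidableEq ι]
    (n : ℕ) [Fact (1 < n)] (φ : G →* Multiplicative (ι → ZMod n)) (π : G →* Q) (f : ι → G)
    (hf : Subgroup.closure (Set.range f) = ⊤)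
    (hφ : ∀ i, φ (f i) = Multiplicative.ofAdd (Pi.single i 1))
    (hpow : ∀ i, π (f i) ^ n = 1) (hcomm : Pairwise fun i j => Commute (π (f i)) (π (f j))) :
    φ.ker ≤ π.ker := by
  let Ψ : Multiplicative (ι → ZMod n) →* Q :=
    (MonoidHom.noncommPiCoprod (fun i => zmodPowersHom n (π (f i)) (hpow i))
      fun i j hij x y => (hcomm hij).pow_pow _ _).comp
      (MulEquiv.funMultiplicative ι (ZMod n)).toMonoidHom
  have hΨ : Ψ.comp φ = π := by
    refine MonoidHom.eq_of_eqOn_dense hf ?_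
    rintro _ ⟨i, rfl⟩
    have hsingle : MulEquiv.funMultiplicative ι (ZMod n) (Multiplicative.ofAdd (Pi.single i 1))
        = Pi.mulSingle i (Multiplicative.ofAdd 1) := by
      ext j; by_cases h : j = i <;> simp [h]
    simp only [Ψ, MonoidHom.comp_apply, hφ, MulEquiv.coe_toMonoidHom, hsingle]
    exact (MonoidHom.noncommPiCoprod_mulSingle _ _ _).trans (zmodPowersHom_ofAdd_one _ _ _)
  intro x hx
  rw [MonoidHom.mem_ker, ← hΨ, MonoidHom.comp_apply, hx, map_one]

end

theorem sq_eq_one_zmod_two {ι : Type*} (v : Multiplicative (ι → ZMod 2)) : v ^ 2 = 1 :=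
  funext fun i => CharTwo.two_nsmul (v.toAdd i)

def SurfaceGroup.of {g : ℕ} (i : Fin (2 * g)) : SurfaceGroup g :=
  PresentedGroup.of i

theorem SurfaceGroup.closure_range_of (g : ℕ) :
    Subgroup.closure (Set.range (SurfaceGroup.of (g := g))) = ⊤ :=
  PresentedGroup.closure_range_of _

theorem surfaceMod2_of {g : ℕ} (i : Fin (2 * g)) :
    surfaceMod2 g (SurfaceGroup.of i) = Multiplicative.ofAdd (Pi.single i 1) :=
  PresentedGroup.toGroup.of _

theorem incProdImage_singleton {g : ℕ} (i : Fin (2 * g)) :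
    incProdImage {i} = SurfaceGroup.of i := by
  rw [incProdImage, Finset.sort_singleton]
  rfl

theorem incProdImage_pair {g : ℕ} {i j : Fin (2 * g)} (hij : i < j) :
    incProdImage {i, j} = SurfaceGroup.of i * SurfaceGroup.of j := by
  rw [incProdImage, Finset.sort_insert (· ≤ ·) (by simpa using hij.le) (by simpa using hij.ne),
    Finset.sort_singleton]
  rfl

theorem ker_surfaceMod2_eq_normalClosure_squares_general (g : ℕ) :
    (surfaceMod2 g).ker =
      Subgroup.normalClosure
        {x : SurfaceGroup g |
          ∃ A : Finset (Fin (2 * g)), A.Nonempty ∧ x = (incProdImage A) ^ 2} := by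
  set N := Subgroup.normalClosure
    {x : SurfaceGroup g | ∃ A : Finset (Fin (2 * g)), A.Nonempty ∧ x = (incProdImage A) ^ 2}
  set π := QuotientGroup.mk' N
  have hsq : ∀ A : Finset (Fin (2 * g)), A.Nonempty → π (incProdImage A) ^ 2 = 1 := fun A hA => by
    rw [← map_pow, ← MonoidHom.mem_ker, QuotientGroup.ker_mk']
    exact Subgroup.subset_normalClosure ⟨A, hA, rfl⟩
  have hsq_of : ∀ i, π (SurfaceGroup.of i) ^ 2 = 1 := fun i => by
    simpa only [incProdImage_singleton] using hsq {i} (Finset.singleton_nonempty i)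
  apply le_antisymm
  · rw [← QuotientGroup.ker_mk' N]
    refine MonoidHom.ker_le_ker_of_pow_eq_one 2 _ π SurfaceGroup.of
      (SurfaceGroup.closure_range_of g) surfaceMod2_of hsq_of (Pairwise.of_lt ?_)
    intro i j hij
    refine commute_of_sq_eq_one (hsq_of i) (hsq_of j) ?_
    simpa only [incProdImage_pair hij, map_mul] using hsq {i, j} (Finset.insert_nonempty i {j})
  · refine Subgroup.normalClosure_le_normal ?_
    rintro _ ⟨A, -, rfl⟩
    rw [SetLike.mem_coe, MonoidHom.mem_ker, map_pow, sq_eq_one_zmod_two]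

/-- The fundamental group of the mod 2 homology cover of the genus-`g` surface
is the normal closure of the `2^{2g} − 1` squares `c_A²`. -/
theorem ker_surfaceMod2_eq_normalClosure_squares (g : ℕ) (hg : 2 ≤ g) :
    (surfaceMod2 g).ker =
      Subgroup.normalClosure
        {x : SurfaceGroup g |
          ∃ A : Finset (Fin (2 * g)), A.Nonempty ∧ x = (incProdImage A) ^ 2} :=
  ker_surfaceMod2_eq_normalClosure_squares_general g
end

section
/- Fix g ≥ 2. The homomorphism FreeGroup (Fin (2g − 1)) →* SurfaceGroup g sending the first g free generators to a₁,…,a_g and the remaining g − 1 free generators to b₁,…,b_{g−1} is injective. In other words, any 2g − 1 of the standard generators of the surface group (omitting b_g) freely generate a free subgroup. -/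
open scoped commutatorElement

/-- The homomorphism `FreeGroup (Fin (2g − 1)) →* SurfaceGroup g` sending the
first `g` free generators to `a₁,…,a_g` and the remaining `g − 1` free
generators to `b₁,…,b_{g−1}` (i.e. the `i`-th generator, `0 ≤ i < 2g − 1`, goes
to the image of the `i`-th free generator of `FreeGroup (Fin (2g))`). -/
def omitLastHom (g : ℕ) : FreeGroup (Fin (2 * g - 1)) →* SurfaceGroup g :=
  FreeGroup.lift fun i =>
    PresentedGroup.of (⟨i.1, by omega⟩ : Fin (2 * g))

/-! With `x = a_g` and `P = ∏_{i<g-1} ⁅aᵢ,bᵢ⁆`, the surface relator `P ⁅x, b_g⁆ = 1` says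
that `b_g` conjugates `x` to `P x`. Both are of infinite order in the free group `F` on the
other `2g − 1` generators (their exponent sum in `a_g` is `1`), so `F` embeds in the HNN
extension of `F` whose stable letter conjugates `⟨x⟩` onto `⟨P x⟩`. Sending `b_g` to the
stable letter defines a homomorphism from the surface group to this HNN extension that
restricts to the embedding of `F`, so `F → SurfaceGroup g` is injective. -/

universe u

open Subgroup

section InfiniteOrder

variable {G : Type*} [Group G] {x y : G}

theorem injective_zpowersHom_of_not_isOfFinOrder (hx : ¬IsOfFinOrder x) :
    Function.Injective (zpowersHom G x) :=
  (injective_zpow_iff_not_isOfFinOrder.2 hx).comp Multiplicative.toAdd.injective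

noncomputable def zpowersEquivZPowersOfNotIsOfFinOrder (hx : ¬IsOfFinOrder x)
    (hy : ¬IsOfFinOrder y) : zpowers x ≃* zpowers y :=
  (MonoidHom.ofInjective (injective_zpowersHom_of_not_isOfFinOrder hx)).symm.trans
    (MonoidHom.ofInjective (injective_zpowersHom_of_not_isOfFinOrder hy))

theorem zpowersEquivZPowersOfNotIsOfFinOrder_apply_self (hx : ¬IsOfFinOrder x)
    (hy : ¬IsOfFinOrder y) :
    zpowersEquivZPowersOfNotIsOfFinOrder hx hy ⟨x, mem_zpowers x⟩ = ⟨y, mem_zpowers y⟩ := by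
  have hx_one : (MonoidHom.ofInjective (injective_zpowersHom_of_not_isOfFinOrder hx)).symm
      ⟨x, mem_zpowers x⟩ = .ofAdd 1 :=
    (MulEquiv.symm_apply_eq _).2 (Subtype.ext (by simp [MonoidHom.ofInjective_apply]))
  apply Subtype.ext
  show zpowersHom G y ((MonoidHom.ofInjective
    (injective_zpowersHom_of_not_isOfFinOrder hx)).symm ⟨x, mem_zpowers x⟩) = y
  rw [hx_one, zpowersHom_apply, toAdd_ofAdd, zpow_one]

theorem not_isOfFinOrder_of_map_eq_ofAdd_one {f : G →* Multiplicative ℤ} (hx : f x = .ofAdd 1) :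
    ¬IsOfFinOrder x := fun h =>
  not_isOfFinOrder_of_isMulTorsionFree (by decide) (hx ▸ f.isOfFinOrder h)

end InfiniteOrder

theorem exists_injective_conj_eq_of_not_isOfFinOrder {G : Type u} [Group G] {x y : G}
    (hx : ¬IsOfFinOrder x) (hy : ¬IsOfFinOrder y) :
    ∃ (K : Type u) (_ : Group K) (f : G →* K) (t : K),
      Function.Injective f ∧ t * f x * t⁻¹ = f y := by
  let φ := zpowersEquivZPowersOfNotIsOfFinOrder hx hy
  refine ⟨HNNExtension G (zpowers x) (zpowers y) φ, inferInstance, HNNExtension.of,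
    HNNExtension.t, HNNExtension.of_injective φ, ?_⟩
  have h := HNNExtension.equiv_eq_conj (φ := φ) ⟨x, mem_zpowers x⟩
  rw [zpowersEquivZPowersOfNotIsOfFinOrder_apply_self] at h
  exact h.symm

namespace SurfaceGroup

variable {g : ℕ}

-- Indexing generators by `ℕ` (with junk value `1` out of range) keeps bound proofs out of
-- the index arithmetic.
def freeGen (N n : ℕ) : FreeGroup (Fin N) := if h : n < N then .of ⟨n, h⟩ else 1

theorem freeGen_eq_of {N n : ℕ} (hn : n < N) : freeGen N n = .of ⟨n, hn⟩ := dif_pos hn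

theorem map_castLE_freeGen {M N n : ℕ} (h : M ≤ N) (hn : n < M) :
    FreeGroup.map (Fin.castLE h) (freeGen M n) = freeGen N n := by
  simp [freeGen, hn, hn.trans_le h]

def exponentSum {N : ℕ} (k : Fin N) : FreeGroup (Fin N) →* Multiplicative ℤ :=
  FreeGroup.lift (Pi.mulSingle k (.ofAdd 1))

theorem surfaceRelator_eq_prod_range (g : ℕ) :
    surfaceRelator g =
      ((List.range g).map fun i => ⁅freeGen (2 * g) i, freeGen (2 * g) (g + i)⁆).prod := by
  rw [surfaceRelator, ← List.map_coe_finRange_eq_range, List.map_map]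
  congr 1
  refine List.map_congr_left fun i _ => ?_
  rw [Function.comp_apply, freeGen_eq_of (by omega), freeGen_eq_of (by omega)]

def partialRelator (g : ℕ) : FreeGroup (Fin (2 * g - 1)) :=
  ((List.range (g - 1)).map fun i =>
    ⁅freeGen (2 * g - 1) i, freeGen (2 * g - 1) (g + i)⁆).prod

theorem surfaceRelator_eq (hg : 0 < g) :
    surfaceRelator g = FreeGroup.map (Fin.castLE (Nat.sub_le _ 1)) (partialRelator g) *
      ⁅FreeGroup.map (Fin.castLE (Nat.sub_le _ 1)) (freeGen (2 * g - 1) (g - 1)),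
        freeGen (2 * g) (2 * g - 1)⁆ := by
  have hsplit : List.range g = List.range (g - 1) ++ [g - 1] := by
    conv_lhs => rw [← Nat.sub_add_cancel hg]
    exact List.range_succ
  rw [surfaceRelator_eq_prod_range, hsplit, List.map_append, List.prod_append, partialRelator,
    map_list_prod, List.map_map, map_castLE_freeGen _ (by omega)]
  simp only [List.map_cons, List.map_nil, List.prod_cons, List.prod_nil, mul_one]
  congr 2
  · refine List.map_congr_left fun i hi => ?_
    rw [List.mem_range] at hi
    rw [Function.comp_apply, map_commutatorElement, map_castLE_freeGen _ (by omega),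
      map_castLE_freeGen _ (by omega)]
  · congr 2
    omega

theorem exponentSum_partialRelator (k : Fin (2 * g - 1)) :
    exponentSum k (partialRelator g) = 1 := by
  rw [partialRelator, map_list_prod, List.map_map]
  refine List.prod_eq_one fun _ hw => ?_
  obtain ⟨i, -, rfl⟩ := List.mem_map.1 hw
  rw [Function.comp_apply, map_commutatorElement, commutatorElement_eq_one_iff_mul_comm, mul_comm]

theorem exponentSum_freeGen_self (hg : 0 < g) :
    exponentSum ⟨g - 1, by omega⟩ (freeGen (2 * g - 1) (g - 1)) = .ofAdd 1 := by
  simp [exponentSum, freeGen_eq_of (by omega : g - 1 < 2 * g - 1)]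

theorem not_isOfFinOrder_freeGen (hg : 0 < g) :
    ¬IsOfFinOrder (freeGen (2 * g - 1) (g - 1)) :=
  not_isOfFinOrder_of_map_eq_ofAdd_one (exponentSum_freeGen_self hg)

theorem not_isOfFinOrder_partialRelator_mul (hg : 0 < g) :
    ¬IsOfFinOrder (partialRelator g * freeGen (2 * g - 1) (g - 1)) :=
  not_isOfFinOrder_of_map_eq_ofAdd_one <| by
    rw [map_mul, exponentSum_partialRelator, one_mul, exponentSum_freeGen_self hg]

section ExtendLast

variable {K : Type*} [Group K] (f : FreeGroup (Fin (2 * g - 1)) →* K) (t : K)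

def extendLast (j : Fin (2 * g)) : K :=
  if h : j.1 < 2 * g - 1 then f (.of ⟨j, h⟩) else t

theorem lift_extendLast_comp_map :
    (FreeGroup.lift (extendLast f t)).comp (FreeGroup.map (Fin.castLE (Nat.sub_le _ 1))) = f := by
  ext i
  simp [extendLast]

theorem lift_extendLast_freeGen_last (hg : 0 < g) :
    FreeGroup.lift (extendLast f t) (freeGen (2 * g) (2 * g - 1)) = t := by
  simp [freeGen_eq_of (by omega : 2 * g - 1 < 2 * g), extendLast]

theorem lift_extendLast_surfaceRelator (hg : 0 < g)
    (ht : t * f (freeGen _ (g - 1)) * t⁻¹ = f (partialRelator g * freeGen _ (g - 1))) :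
    FreeGroup.lift (extendLast f t) (surfaceRelator g) = 1 := by
  rw [surfaceRelator_eq hg, map_mul, map_commutatorElement, ← MonoidHom.comp_apply,
    ← MonoidHom.comp_apply, lift_extendLast_comp_map, lift_extendLast_freeGen_last f t hg,
    commutatorElement_def]
  rw [map_mul, ← mul_inv_eq_iff_eq_mul] at ht
  rw [← ht]
  group

end ExtendLast

end SurfaceGroup

open SurfaceGroup in
/-- Freiheitssatz for the surface group: the `2g − 1` standard generators
`a₁,…,a_g, b₁,…,b_{g−1}` (omitting `b_g`) freely generate a free subgroup. -/
theorem omitLastHom_injective (g : ℕ) (hg : 2 ≤ g) :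
    Function.Injective (omitLastHom g) := by
  have hg₀ : 0 < g := by omega
  obtain ⟨K, _, f, t, hf, ht⟩ := exists_injective_conj_eq_of_not_isOfFinOrder
    (not_isOfFinOrder_freeGen hg₀) (not_isOfFinOrder_partialRelator_mul hg₀)
  have hrel : ∀ r ∈ ({surfaceRelator g} : Set _), FreeGroup.lift (extendLast f t) r = 1 := by
    rintro r rfl
    exact lift_extendLast_surfaceRelator f t hg₀ ht
  let φ : SurfaceGroup g →* K := PresentedGroup.toGroup hrel
  have hφ : φ.comp (omitLastHom g) = f := by
    ext i
    exact (PresentedGroup.toGroup.of hrel).trans (dif_pos i.2)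
  exact Function.Injective.of_comp (f := φ) (by rwa [← MonoidHom.coe_comp, hφ])
end
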